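/- arXiv:1809.08153 — 2 statements merged into one kernel-verified Lean document; each statement's English description precedes it below -/
import Mathlib

section
/- Suppose |PROP| ≥ ℵ₀. Then the class of inconsistent pointed models is definable by the single formula ⋁_{p ∈ PROP}(p ∧ ~p) of L_{|PROP|⁺ω}→ (a pointed model (M,T) satisfies ⋁_{p ∈ PROP}(p ∧ ~p) at T iff it is inconsistent), but for every class V_S with {(M,T) : M an RM-model} ⊆ V_S ⊆ {(M,T) : M a B-model} this class is not axiomatizable by any set of formulas of L_{ωω}→ with respect to V_S; hence L_{|PROP|⁺ω}→ is a proper expressive extension of L_{ωω}→ over V_S. -/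
universe u

/-- Formulas of the infinitary relevant language with absurdity `L_{∞ω}→` over
propositional variables `P`.  Conjunctions and disjunctions are indexed by
arbitrary (set-sized) index types. -/
inductive RelForm (P : Type u) : Type (u + 1)
  | atom : P → RelForm P
  | bot : RelForm P
  | neg : RelForm P → RelForm P
  | conj : (ι : Type u) → (ι → RelForm P) → RelForm P
  | disj : (ι : Type u) → (ι → RelForm P) → RelForm P
  | imp : RelForm P → RelForm P → RelForm P

/-- A Routley–Meyer model. -/
structure RMModel (P : Type u) : Type (u + 1) where
  W : Type u
  nonempty : Nonempty W
  R : W → W → W → Prop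
  star : W → W
  V : P → W → Prop

/-- Routley–Meyer satisfaction. -/
def RMModel.sat {P : Type u} (M : RMModel P) : M.W → RelForm P → Prop
  | w, .atom p => M.V p w
  | _, .bot => False
  | w, .neg φ => ¬ M.sat (M.star w) φ
  | w, .conj _ f => ∀ i, M.sat w (f i)
  | w, .disj _ f => ∃ i, M.sat w (f i)
  | w, .imp φ ψ => ∀ a b, M.R w a b → M.sat a φ → M.sat b ψ

/-- The degree of an infinitary relevant formula. -/
noncomputable def RelForm.deg {P : Type u} : RelForm P → Ordinal.{u}
  | .atom _ => 0
  | .bot => 0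
  | .neg φ => φ.deg
  | .conj _ f => ⨆ i, (f i).deg
  | .disj _ f => ⨆ i, (f i).deg
  | .imp φ ψ => max φ.deg ψ.deg + 1

/-- A formula lies in the fragment `L_{κω}→` : all its conjunctions and
disjunctions have index sets of cardinality `< κ`. -/
def RelForm.indexBound {P : Type u} (κ : Cardinal.{u}) : RelForm P → Prop
  | .atom _ => True
  | .bot => True
  | .neg φ => φ.indexBound κ
  | .conj ι f => Cardinal.mk ι < κ ∧ ∀ i, (f i).indexBound κ
  | .disj ι f => Cardinal.mk ι < κ ∧ ∀ i, (f i).indexBound κ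
  | .imp φ ψ => φ.indexBound κ ∧ ψ.indexBound κ

/-- The propositional variables occurring in a relevant formula. -/
def RelForm.props {P : Type u} : RelForm P → Set P
  | .atom p => {p}
  | .bot => ∅
  | .neg φ => φ.props
  | .conj _ f => ⋃ i, (f i).props
  | .disj _ f => ⋃ i, (f i).props
  | .imp φ ψ => φ.props ∪ ψ.props

/-- The B-model frame/valuation conditions, for the pointed model `(M, T)`. -/
def IsBModel {P : Type u} (M : RMModel P) (T : M.W) : Prop :=
  (∀ x, M.R T x x) ∧
  (∀ x v y z, M.R T x v → M.R v y z → M.R x y z) ∧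
  (∀ x, M.star (M.star x) = x) ∧
  (∀ x y, M.R T x y → M.R T (M.star y) (M.star x)) ∧
  (∀ p x y, M.V p x → M.R T x y → M.V p y)

/-- The RM-model conditions, for the pointed model `(M, T)`. -/
def IsRMModel {P : Type u} (M : RMModel P) (T : M.W) : Prop :=
  IsBModel M T ∧
  (∀ z x y, M.R z x y → M.R z (M.star y) (M.star x)) ∧
  (∀ x y z v, (∃ u, M.R x y u ∧ M.R u z v) → (∃ u, M.R x u v ∧ M.R y z u)) ∧
  (∀ x, M.R x x x) ∧
  (∀ x y z, M.R x y z → M.R y x z) ∧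
  (∀ x y z, M.R x y z → M.R T x z ∨ M.R T y z)

/-- A pointed model `(M, T)` is inconsistent if `p ∧ ~p` holds at `T`
for some propositional variable `p`. -/
def Inconsistent {P : Type u} (M : RMModel P) (T : M.W) : Prop :=
  ∃ p : P, M.sat T (.atom p) ∧ M.sat T (.neg (.atom p))

/-- A relevant directed bisimulation between `M₁` and `M₂` for the set `Q` of
propositional variables. -/
structure IsRelDirectedBisim {P : Type u} (Q : Set P) (M₁ M₂ : RMModel P)
    (Z₁ : M₁.W → M₂.W → Prop) (Z₂ : M₂.W → M₁.W → Prop) : Prop where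
  nonempty₁ : ∃ x y, Z₁ x y
  nonempty₂ : ∃ x y, Z₂ x y
  star₁ : ∀ x y, Z₁ x y → Z₂ (M₂.star y) (M₁.star x)
  star₂ : ∀ x y, Z₂ x y → Z₁ (M₁.star y) (M₂.star x)
  back₁ : ∀ x y b c, Z₁ x y → M₂.R y b c →
    ∃ b' c', M₁.R x b' c' ∧ Z₂ b b' ∧ Z₁ c' c
  back₂ : ∀ x y b c, Z₂ x y → M₁.R y b c →
    ∃ b' c', M₂.R x b' c' ∧ Z₁ b b' ∧ Z₂ c' c
  atom₁ : ∀ x y, Z₁ x y → ∀ p ∈ Q, M₁.V p x → M₂.V p y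
  atom₂ : ∀ x y, Z₂ x y → ∀ p ∈ Q, M₂.V p x → M₁.V p y

/-- A relevant directed α-bisimulation between `M₁` and `M₂` (for all
propositional variables): a system of pairs of nonempty relations
`⟨Z₁ β, Z₂ β⟩` for `β ≤ α`, decreasing in `β`. -/
structure IsRelDirectedAlphaBisim {P : Type u} (M₁ M₂ : RMModel P) (α : Ordinal.{u})
    (Z₁ : Ordinal.{u} → M₁.W → M₂.W → Prop)
    (Z₂ : Ordinal.{u} → M₂.W → M₁.W → Prop) : Prop where
  nonempty₁ : ∀ β ≤ α, ∃ x y, Z₁ β x y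
  nonempty₂ : ∀ β ≤ α, ∃ x y, Z₂ β x y
  anti₁ : ∀ β γ, β ≤ γ → γ ≤ α → ∀ x y, Z₁ γ x y → Z₁ β x y
  anti₂ : ∀ β γ, β ≤ γ → γ ≤ α → ∀ x y, Z₂ γ x y → Z₂ β x y
  star₁ : ∀ γ ≤ α, ∀ x y, Z₁ γ x y → Z₂ γ (M₂.star y) (M₁.star x)
  star₂ : ∀ γ ≤ α, ∀ x y, Z₂ γ x y → Z₁ γ (M₁.star y) (M₂.star x)
  back₁ : ∀ β < α, ∀ x y, Z₁ (Order.succ β) x y → ∀ b c, M₂.R y b c →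
    ∃ b' c', M₁.R x b' c' ∧ Z₂ β b b' ∧ Z₁ β c' c
  back₂ : ∀ β < α, ∀ x y, Z₂ (Order.succ β) x y → ∀ b c, M₁.R y b c →
    ∃ b' c', M₂.R x b' c' ∧ Z₁ β b b' ∧ Z₂ β c' c
  atom₁ : ∀ γ ≤ α, ∀ x y, Z₁ γ x y → ∀ p, M₁.V p x → M₂.V p y
  atom₂ : ∀ γ ≤ α, ∀ x y, Z₂ γ x y → ∀ p, M₂.V p x → M₁.V p y

/-! ### The correspondence language `L_{∞ω}^{corr}` -/

/-- Terms of the correspondence language: variables and the Routley star. -/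
inductive CTerm : Type
  | var : ℕ → CTerm
  | star : CTerm → CTerm

/-- Formulas of the classical infinitary correspondence language, over the
signature with the ternary relation `R`, the unary function `*` and one unary
predicate for each element of `P`. -/
inductive CForm (P : Type u) : Type (u + 1)
  | rel : CTerm → CTerm → CTerm → CForm P
  | prop : P → CTerm → CForm P
  | not : CForm P → CForm P
  | and : CForm P → CForm P → CForm P
  | imp : CForm P → CForm P → CForm P
  | conj : (ι : Type u) → (ι → CForm P) → CForm P
  | disj : (ι : Type u) → (ι → CForm P) → CForm P
  | all : ℕ → CForm P → CForm P
  | ex : ℕ → CForm P → CForm P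

/-- Evaluation of terms in a Routley–Meyer model, read as a classical
structure. -/
def CTerm.eval {P : Type u} (M : RMModel P) (v : ℕ → M.W) : CTerm → M.W
  | .var n => v n
  | .star t => M.star (t.eval M v)

/-- Classical (Tarskian) satisfaction for the correspondence language. -/
def CForm.Sat {P : Type u} (M : RMModel P) : (ℕ → M.W) → CForm P → Prop
  | v, .rel t₁ t₂ t₃ => M.R (t₁.eval M v) (t₂.eval M v) (t₃.eval M v)
  | v, .prop p t => M.V p (t.eval M v)
  | v, .not φ => ¬ CForm.Sat M v φ
  | v, .and φ ψ => CForm.Sat M v φ ∧ CForm.Sat M v ψ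
  | v, .imp φ ψ => CForm.Sat M v φ → CForm.Sat M v ψ
  | v, .conj _ f => ∀ i, CForm.Sat M v (f i)
  | v, .disj _ f => ∃ i, CForm.Sat M v (f i)
  | v, .all n φ => ∀ a : M.W, CForm.Sat M (Function.update v n a) φ
  | v, .ex n φ => ∃ a : M.W, CForm.Sat M (Function.update v n a) φ

/-- The predicates (corresponding to propositional variables) occurring in a
correspondence-language formula. -/
def CForm.props {P : Type u} : CForm P → Set P
  | .rel _ _ _ => ∅
  | .prop p _ => {p}
  | .not φ => φ.props
  | .and φ ψ => φ.props ∪ ψ.props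
  | .imp φ ψ => φ.props ∪ ψ.props
  | .conj _ f => ⋃ i, (f i).props
  | .disj _ f => ⋃ i, (f i).props
  | .all _ φ => φ.props
  | .ex _ φ => φ.props

/-- Auxiliary standard translation `T_x(φ)^{t/x}`: the parameter `n` is a
supply of fresh variables (all variables of `t` are `< n`). -/
def stAux {P : Type u} : ℕ → CTerm → RelForm P → CForm P
  | _, t, .bot => .and (.not (.rel t t t)) (.rel t t t)
  | _, t, .atom p => .prop p t
  | n, t, .neg φ => .not (stAux n (.star t) φ)
  | n, t, .conj ι f => .conj ι fun i => stAux n t (f i)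
  | n, t, .disj ι f => .disj ι fun i => stAux n t (f i)
  | n, t, .imp φ ψ =>
      .all n (.all (n + 1)
        (.imp (.and (.rel t (.var n) (.var (n + 1))) (stAux (n + 2) (.var n) φ))
          (stAux (n + 2) (.var (n + 1)) ψ)))

/-- The standard translation `T_x(φ)` with free variable `x = var 0`. -/
def stT {P : Type u} (φ : RelForm P) : CForm P := stAux 1 (.var 0) φ

/-- Satisfaction of a correspondence-language formula with one free variable
`x = var 0` at the element `w`. -/
def CForm.SatAt {P : Type u} (φ : CForm P) (M : RMModel P) (w : M.W) : Prop :=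
  CForm.Sat M (fun _ => w) φ

/-- Expansion of a model by interpretations of extra predicates. -/
def RMModel.expand {P Q : Type u} (M : RMModel P) (I : Q → M.W → Prop) :
    RMModel (P ⊕ Q) :=
  { W := M.W, nonempty := M.nonempty, R := M.R, star := M.star,
    V := Sum.elim M.V I }

/-- A `Σ¹₁` formula over the correspondence language: second-order existential
quantification over a family of extra predicates, in front of a formula. -/
structure Sigma11Form (P : Type u) : Type (u + 1) where
  preds : Type u
  matrix : CForm (P ⊕ preds)

/-- A `Π¹₁` formula over the correspondence language. -/
structure Pi11Form (P : Type u) : Type (u + 1) where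
  preds : Type u
  matrix : CForm (P ⊕ preds)

/-- Satisfaction of a `Σ¹₁` formula (one free variable) at a point. -/
def Sigma11Form.SatAt {P : Type u} (φ : Sigma11Form P) (M : RMModel P)
    (w : M.W) : Prop :=
  ∃ I : φ.preds → M.W → Prop, CForm.Sat (M.expand I) (fun _ => w) φ.matrix

/-- Satisfaction of a `Π¹₁` formula (one free variable) at a point. -/
def Pi11Form.SatAt {P : Type u} (φ : Pi11Form P) (M : RMModel P)
    (w : M.W) : Prop :=
  ∀ I : φ.preds → M.W → Prop, CForm.Sat (M.expand I) (fun _ => w) φ.matrix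

/-- Propositional-variable predicates occurring in a `Σ¹₁` formula. -/
def Sigma11Form.props {P : Type u} (φ : Sigma11Form P) : Set P :=
  {p : P | Sum.inl p ∈ φ.matrix.props}

/-- Propositional-variable predicates occurring in a `Π¹₁` formula. -/
def Pi11Form.props {P : Type u} (φ : Pi11Form P) : Set P :=
  {p : P | Sum.inl p ∈ φ.matrix.props}

/-- `A` implies `B` along relevant directed bisimulations for `Q` over the
class `K`. -/
def ImpliesAlong {P : Type u} (K : RMModel P → Prop) (Q : Set P)
    (A B : (M : RMModel P) → M.W → Prop) : Prop :=
  ∀ M₁ M₂ : RMModel P, K M₁ → K M₂ →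
    ∀ (Z₁ : M₁.W → M₂.W → Prop) (Z₂ : M₂.W → M₁.W → Prop),
      IsRelDirectedBisim Q M₁ M₂ Z₁ Z₂ →
        (∀ a b, Z₁ a b → A M₁ a → B M₂ b) ∧ (∀ a b, Z₂ a b → A M₂ a → B M₁ b)

/-- A Hilbert-style formal system for `L_{κ⁺ω}→`: a set of axioms, and a set of
rules each with fewer than `κ⁺` premises. -/
structure HilbertSystem (P : Type u) (κ : Cardinal.{u}) : Type (u + 1) where
  Axioms : Set (RelForm P)
  Rules : Set ((ι : Type u) × (ι → RelForm P) × RelForm P)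
  rules_small : ∀ r ∈ Rules, Cardinal.mk r.1 < Order.succ κ

/-- `Γ ⊢_H φ`: there is a sequence of formulas of length `< κ⁺`, each member of
which is an axiom, a member of `Γ`, or follows from previous members by a rule,
with `φ` occurring (as its last member). -/
def HilbertSystem.Proves {P : Type u} {κ : Cardinal.{u}} (H : HilbertSystem P κ)
    (Γ : Set (RelForm P)) (φ : RelForm P) : Prop :=
  ∃ (δ : Ordinal.{u}) (s : ∀ γ : Ordinal.{u}, γ < δ → RelForm P),
    δ.card < Order.succ κ ∧
    (∀ γ (hγ : γ < δ),
      s γ hγ ∈ H.Axioms ∨ s γ hγ ∈ Γ ∨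
      ∃ r ∈ H.Rules, r.2.2 = s γ hγ ∧
        ∀ i : r.1, ∃ γ', ∃ hlt : γ' < γ, s γ' (hlt.trans hγ) = r.2.1 i) ∧
    ∃ γ, ∃ hγ : γ < δ, s γ hγ = φ

/-- The formula `⋁_{p ∈ PROP} (p ∧ ~p)` expressing inconsistency. -/
def inconsistencyFormula (P : Type u) : RelForm P :=
  .disj P fun p =>
    .conj (ULift.{u} Bool) fun b => bif b.down then .atom p else .neg (.atom p)

/-- A two-world RM-model inconsistent exactly at `q`. -/
def witnessModel {P : Type u} (q : P) : RMModel P where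
  W := ULift.{u} Bool
  nonempty := ⟨⟨true⟩⟩
  R := fun x y z => x.down = true → y.down = true → z.down = true
  star := fun x => ⟨!x.down⟩
  V := fun p x => p = q ∧ x.down = true

theorem witnessModel_isRM {P : Type u} (q : P) :
    IsRMModel (witnessModel q) ⟨true⟩ := by
  refine ⟨⟨?_, ?_, ?_, ?_, ?_⟩, ?_, ?_, ?_, ?_, ?_⟩
  · exact fun x _ h => h
  · exact fun x v y z h1 h2 hx hy => h2 (h1 rfl hx) hy
  · rintro ⟨x⟩; cases x <;> rfl
  · rintro ⟨x⟩ ⟨y⟩ h; cases x <;> cases y <;> simp_all [witnessModel]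
  · rintro p x y ⟨hpq, hx⟩ h; exact ⟨hpq, h rfl hx⟩
  · rintro ⟨z⟩ ⟨x⟩ ⟨y⟩ h; cases x <;> cases y <;> cases z <;>
      simp_all [witnessModel]
  · rintro ⟨x⟩ ⟨y⟩ ⟨z⟩ ⟨v⟩ ⟨⟨u⟩, h1, h2⟩
    refine ⟨⟨y && z⟩, ?_, ?_⟩ <;>
      (cases x <;> cases y <;> cases z <;> cases v <;> cases u <;>
        simp_all [witnessModel])
  · exact fun x _ h => h
  · exact fun x y z h hy hx => h hx hy
  · rintro ⟨x⟩ ⟨y⟩ ⟨z⟩ h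
    rcases x with _ | _
    · left; intro _ hf; exact absurd hf (by simp)
    · right; intro _ hy; exact h rfl hy

/-- The conjunction `p ∧ ~p` as a finitary formula. -/
def contraForm {P : Type u} (p : P) : RelForm P :=
  .conj (ULift.{u} Bool) fun b => bif b.down then .atom p else .neg (.atom p)

theorem contraForm_injective {P : Type u} :
    Function.Injective (contraForm (P := P)) := by
  intro p p' h
  simp only [contraForm, RelForm.conj.injEq, heq_eq_eq, true_and] at h
  have := congrFun h ⟨true⟩
  simpa [RelForm.atom.injEq] using this

theorem sat_contraForm {P : Type u} (M : RMModel P) (T : M.W) (p : P) :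
    M.sat T (contraForm p) ↔
      (M.sat T (.atom p) ∧ M.sat T (.neg (.atom p))) := by
  constructor
  · intro h
    exact ⟨h ⟨true⟩, h ⟨false⟩⟩
  · rintro ⟨h1, h2⟩ ⟨b⟩
    cases b
    · exact h2
    · exact h1

/-- If `PROP` is infinite then the class of inconsistent
pointed models is defined by the single formula `⋁_{p ∈ PROP} (p ∧ ~p)` of
`L_{|PROP|⁺ω}→`, but (given compactness of the finitary language) it is not
axiomatizable by any set of formulas of `L_{ωω}→` with respect to any class
`V_S` between the RM-models and the B-models; hence `L_{|PROP|⁺ω}→` is a proper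
expressive extension of `L_{ωω}→`. -/
theorem inconsistency_definable_infinitary_not_finitary {P : Type u} [Infinite P]
    (VS : ∀ M : RMModel P, M.W → Prop)
    (hRM : ∀ (M : RMModel P) (T : M.W), IsRMModel M T → VS M T)
    (hB : ∀ (M : RMModel P) (T : M.W), VS M T → IsBModel M T)
    (hcompact : ∀ Φ Ψ : Set (RelForm P),
      (∀ φ ∈ Φ, φ.indexBound Cardinal.aleph0.{u}) →
      (∀ ψ ∈ Ψ, ψ.indexBound Cardinal.aleph0.{u}) →
      (∀ (Φ₀ Ψ₀ : Finset (RelForm P)), ↑Φ₀ ⊆ Φ → ↑Ψ₀ ⊆ Ψ →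
        ∃ (M : RMModel P) (T : M.W), VS M T ∧
          (∀ φ ∈ Φ₀, M.sat T φ) ∧ (∀ ψ ∈ Ψ₀, ¬ M.sat T ψ)) →
      ∃ (M : RMModel P) (T : M.W), VS M T ∧
        (∀ φ ∈ Φ, M.sat T φ) ∧ (∀ ψ ∈ Ψ, ¬ M.sat T ψ)) :
    (inconsistencyFormula P).indexBound (Order.succ (Cardinal.mk P)) ∧
    (∀ (M : RMModel P) (T : M.W),
      M.sat T (inconsistencyFormula P) ↔ Inconsistent M T) ∧
    ¬ ∃ Γ : Set (RelForm P),
        (∀ φ ∈ Γ, φ.indexBound Cardinal.aleph0.{u}) ∧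
        ∀ (M : RMModel P) (T : M.W), VS M T →
          ((∀ φ ∈ Γ, M.sat T φ) ↔ Inconsistent M T) := by
  refine ⟨?_, ?_, ?_⟩
  · -- index bound
    refine ⟨Order.lt_succ _, fun p => ⟨?_, ?_⟩⟩
    · calc Cardinal.mk (ULift.{u} Bool) < Cardinal.aleph0 := by
            exact Cardinal.lt_aleph0_of_finite _
        _ ≤ Cardinal.mk P := Cardinal.aleph0_le_mk P
        _ < Order.succ (Cardinal.mk P) := Order.lt_succ _
    · rintro ⟨b⟩; cases b <;> trivial
  · -- the formula defines inconsistency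
    intro M T
    constructor
    · rintro ⟨p, hp⟩
      exact ⟨p, hp ⟨true⟩, hp ⟨false⟩⟩
    · rintro ⟨p, h1, h2⟩
      refine ⟨p, ?_⟩
      rintro ⟨b⟩; cases b
      · exact h2
      · exact h1
  · -- non-axiomatizability
    rintro ⟨Γ, hΓbound, hΓ⟩
    have key := hcompact Γ (Set.range (contraForm (P := P))) hΓbound
      (by
        rintro ψ ⟨p, rfl⟩
        refine ⟨Cardinal.lt_aleph0_of_finite _, ?_⟩
        rintro ⟨b⟩; cases b <;> trivial)
      (by
        intro Φ₀ Ψ₀ hΦ₀ hΨ₀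
        -- choose a fresh variable q
        have hSfin : (contraForm (P := P) ⁻¹' ↑Ψ₀).Finite :=
          Set.Finite.preimage (contraForm_injective.injOn) Ψ₀.finite_toSet
        obtain ⟨q, hq⟩ := hSfin.infinite_compl.nonempty
        have hqΨ : contraForm q ∉ ↑Ψ₀ := hq
        -- the witness model
        have hRMq := witnessModel_isRM q
        have hVSq := hRM _ _ hRMq
        have hIncon : Inconsistent (witnessModel q) ⟨true⟩ := by
          refine ⟨q, ⟨rfl, rfl⟩, ?_⟩
          rintro ⟨_, h⟩
          simp [witnessModel] at h
        have hsatΓ : ∀ φ ∈ Γ, (witnessModel q).sat ⟨true⟩ φ :=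
          (hΓ _ _ hVSq).mpr hIncon
        refine ⟨witnessModel q, ⟨true⟩, hVSq, fun φ hφ => hsatΓ φ (hΦ₀ hφ), ?_⟩
        intro ψ hψ
        obtain ⟨p, rfl⟩ := hΨ₀ hψ
        have hpq : p ≠ q := by
          rintro rfl; exact hqΨ hψ
        intro hsat
        have := (sat_contraForm _ _ _).mp hsat
        exact hpq this.1.1)
    obtain ⟨M, T, hVS, hsatΓ, hrefΨ⟩ := key
    obtain ⟨p, h1, h2⟩ := (hΓ M T hVS).mp hsatΓ
    exact hrefΨ (contraForm p) ⟨p, rfl⟩ ((sat_contraForm M T p).mpr ⟨h1, h2⟩)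
end

section
/- If κ is a singular cardinal, then the infinitary relevant language L_{κω}→ is exactly as expressive as L_{κ⁺ω}→: every formula of L_{κ⁺ω}→ is equivalent to a formula of L_{κω}→, where two formulas are equivalent if they are satisfied at exactly the same worlds of all Routley–Meyer models. -/
universe u

/-!
A conjunction or disjunction indexed by a set of size `κ` can be regrouped as one over
`cof κ < κ` blocks, each of size `< κ`: pull back the initial segments `(-∞, j]` of `κ`, for
`j` in a cofinal subset, along an embedding of the index set into `κ`. Doing this at every
node of a formula of `L_{κ⁺ω}→` yields an equivalent formula of `L_{κω}→`.
-/

open Cardinal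

theorem Cardinal.exists_iUnion_eq_univ_of_ord_cof_lt {κ : Cardinal.{u}} (hκ : ℵ₀ ≤ κ)
    (hsing : κ.ord.cof < κ) {ι : Type u} (hι : #ι ≤ κ) :
    ∃ (J : Type u) (s : J → Set ι),
      #J < κ ∧ (∀ j, #(s j) < κ) ∧ ⋃ j, s j = Set.univ := by
  obtain ⟨e⟩ : Nonempty (ι ↪ κ.ord.ToType) := by
    rwa [← Cardinal.le_def, Cardinal.mk_toType, Cardinal.card_ord]
  obtain ⟨S, hS, hScard⟩ := Order.exists_cof_eq κ.ord.ToType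
  refine ⟨S, fun j => e ⁻¹' Set.Iic j.1, by rwa [hScard, Ordinal.cof_toType],
    fun j => ?_, ?_⟩
  · calc #(e ⁻¹' Set.Iic j.1) ≤ #(Set.Iic j.1) := mk_preimage_of_injective _ _ e.injective
      _ < κ := by simpa using mk_Iic_lt j.1 (by simp) (by simpa using hκ)
  · refine Set.eq_univ_of_forall fun i => ?_
    obtain ⟨y, hyS, hy⟩ := hS (e i)
    exact Set.mem_iUnion.2 ⟨⟨y, hyS⟩, hy⟩

namespace RelForm

variable {P : Type u}

def Equivalent (φ ψ : RelForm P) : Prop :=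
  ∀ (M : RMModel P) (w : M.W), M.sat w φ ↔ M.sat w ψ

namespace Equivalent

theorem trans {φ ψ χ : RelForm P} (h₁ : Equivalent φ ψ) (h₂ : Equivalent ψ χ) :
    Equivalent φ χ :=
  fun M w => (h₁ M w).trans (h₂ M w)

theorem neg {φ ψ : RelForm P} (h : Equivalent φ ψ) : Equivalent (.neg φ) (.neg ψ) :=
  fun M w => not_congr (h M (M.star w))

theorem imp {φ₁ φ₂ ψ₁ ψ₂ : RelForm P} (h₁ : Equivalent φ₁ ψ₁) (h₂ : Equivalent φ₂ ψ₂) :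
    Equivalent (.imp φ₁ φ₂) (.imp ψ₁ ψ₂) :=
  fun M _ => forall₂_congr fun a b =>
    imp_congr_right fun _ => imp_congr (h₁ M a) (h₂ M b)

theorem conj {ι : Type u} {f g : ι → RelForm P} (h : ∀ i, Equivalent (f i) (g i)) :
    Equivalent (.conj ι f) (.conj ι g) :=
  fun M w => forall_congr' fun i => h i M w

theorem disj {ι : Type u} {f g : ι → RelForm P} (h : ∀ i, Equivalent (f i) (g i)) :
    Equivalent (.disj ι f) (.disj ι g) :=
  fun M w => exists_congr fun i => h i M w

end Equivalent

section Regroup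

variable {ι J : Type u} {s : J → Set ι}

theorem equivalent_conj_iUnion (hs : ⋃ j, s j = Set.univ) (f : ι → RelForm P) :
    Equivalent (.conj ι f) (.conj J fun j => .conj (s j) fun i => f i) := by
  intro M w
  simp only [RMModel.sat, Subtype.forall]
  exact ⟨fun H _ i _ => H i, fun H i => by
    obtain ⟨j, hj⟩ := Set.mem_iUnion.1 (hs ▸ Set.mem_univ i)
    exact H j i hj⟩

theorem equivalent_disj_iUnion (hs : ⋃ j, s j = Set.univ) (f : ι → RelForm P) :
    Equivalent (.disj ι f) (.disj J fun j => .disj (s j) fun i => f i) := by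
  intro M w
  simp only [RMModel.sat, Subtype.exists]
  exact ⟨fun ⟨i, hi⟩ => by
    obtain ⟨j, hj⟩ := Set.mem_iUnion.1 (hs ▸ Set.mem_univ i)
    exact ⟨j, i, hj, hi⟩, fun ⟨_, i, _, hi⟩ => ⟨i, hi⟩⟩

end Regroup

section Singular

variable {κ : Cardinal.{u}} {ι : Type u} {f : ι → RelForm P}

theorem exists_indexBound_equivalent_conj (hκ : ℵ₀ ≤ κ) (hsing : κ.ord.cof < κ) (hι : #ι ≤ κ)
    (hf : ∀ i, (f i).indexBound κ) :
    ∃ ψ : RelForm P, ψ.indexBound κ ∧ Equivalent (.conj ι f) ψ := by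
  obtain ⟨J, s, hJ, hs, hcov⟩ := exists_iUnion_eq_univ_of_ord_cof_lt hκ hsing hι
  exact ⟨.conj J fun j => .conj (s j) fun i => f i, ⟨hJ, fun j => ⟨hs j, fun i => hf i⟩⟩,
    equivalent_conj_iUnion hcov f⟩

theorem exists_indexBound_equivalent_disj (hκ : ℵ₀ ≤ κ) (hsing : κ.ord.cof < κ) (hι : #ι ≤ κ)
    (hf : ∀ i, (f i).indexBound κ) :
    ∃ ψ : RelForm P, ψ.indexBound κ ∧ Equivalent (.disj ι f) ψ := by
  obtain ⟨J, s, hJ, hs, hcov⟩ := exists_iUnion_eq_univ_of_ord_cof_lt hκ hsing hι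
  exact ⟨.disj J fun j => .disj (s j) fun i => f i, ⟨hJ, fun j => ⟨hs j, fun i => hf i⟩⟩,
    equivalent_disj_iUnion hcov f⟩

end Singular

end RelForm

/-- If `κ` is a singular cardinal then `L_{κω}→` is exactly
as expressive as `L_{κ⁺ω}→`: every formula of `L_{κ⁺ω}→` is equivalent (over
all Routley–Meyer models) to a formula of `L_{κω}→`. -/
theorem singular_collapse {P : Type u} (κ : Cardinal.{u})
    (hκ : Cardinal.aleph0.{u} ≤ κ) (hsing : κ.ord.cof < κ) :
    ∀ φ : RelForm P, φ.indexBound (Order.succ κ) →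
      ∃ ψ : RelForm P, ψ.indexBound κ ∧
        ∀ (M : RMModel P) (w : M.W), M.sat w φ ↔ M.sat w ψ := by
  intro φ
  induction φ with
  | atom p => exact fun _ => ⟨.atom p, trivial, fun _ _ => Iff.rfl⟩
  | bot => exact fun _ => ⟨.bot, trivial, fun _ _ => Iff.rfl⟩
  | neg φ ih =>
    intro h
    obtain ⟨ψ, hψ, e⟩ := ih h
    exact ⟨.neg ψ, hψ, RelForm.Equivalent.neg e⟩
  | imp φ₁ φ₂ ih₁ ih₂ =>
    rintro ⟨h₁, h₂⟩
    obtain ⟨ψ₁, hψ₁, e₁⟩ := ih₁ h₁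
    obtain ⟨ψ₂, hψ₂, e₂⟩ := ih₂ h₂
    exact ⟨.imp ψ₁ ψ₂, ⟨hψ₁, hψ₂⟩, RelForm.Equivalent.imp e₁ e₂⟩
  | conj ι f ih =>
    rintro ⟨hι, hf⟩
    choose g hg e using fun i => ih i (hf i)
    obtain ⟨ψ, hψ, e'⟩ := RelForm.exists_indexBound_equivalent_conj hκ hsing
      (Order.lt_succ_iff.mp hι) hg
    exact ⟨ψ, hψ, (RelForm.Equivalent.conj e).trans e'⟩
  | disj ι f ih =>
    rintro ⟨hι, hf⟩
    choose g hg e using fun i => ih i (hf i)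
    obtain ⟨ψ, hψ, e'⟩ := RelForm.exists_indexBound_equivalent_disj hκ hsing
      (Order.lt_succ_iff.mp hι) hg
    exact ⟨ψ, hψ, (RelForm.Equivalent.disj e).trans e'⟩
end
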